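/- Let L = ⟨a,b,c,d,x⟩ with the Grigorchuk generators and the adding machine, K = ⟨[a,b]⟩^G the normal closure in G = ⟨a,b,c,d⟩, S = [⟨x⟩, G]^L, and R = K·S·γ₂(L) (normal closure in L). Then R contains the subgroup S × S of st_L(1) ≤ Aut(T₀)×Aut(T₁), i.e. (1,s) ∈ R and (s,1) ∈ R for every s ∈ S. -/

import Mathlib

namespace GrigTree

/-- Vertices of the rooted binary tree: finite binary strings. -/
abbrev V := List Bool

/-- The rooted automorphism `a`, swapping the two first-level subtrees. -/
def aFun : V → V
  | [] => []
  | i :: w => (!i) :: w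

lemma aFun_invol : ∀ w, aFun (aFun w) = w
  | [] => rfl
  | _ :: _ => by simp [aFun]

/-- The automorphism `a` as a permutation. -/
def a : Equiv.Perm V := ⟨aFun, aFun, aFun_invol, aFun_invol⟩

/-- The adding machine `x = (1, x)a`. -/
def xFun : V → V
  | [] => []
  | false :: w => true :: w
  | true :: w => false :: xFun w

def xInvFun : V → V
  | [] => []
  | true :: w => false :: w
  | false :: w => true :: xInvFun w

lemma x_left_inv : ∀ w, xInvFun (xFun w) = w
  | [] => rfl
  | false :: _ => rfl
  | true :: w => by simp [xFun, xInvFun, x_left_inv w]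

lemma x_right_inv : ∀ w, xFun (xInvFun w) = w
  | [] => rfl
  | true :: _ => rfl
  | false :: w => by simp [xFun, xInvFun, x_right_inv w]

/-- The adding machine as a permutation of the tree. -/
def x : Equiv.Perm V := ⟨xFun, xInvFun, x_left_inv, x_right_inv⟩

/-- States of the Grigorchuk automaton (the nontrivial ones). -/
inductive St | b | c | d
  deriving DecidableEq

def nextSt : St → St
  | .b => .c
  | .c => .d
  | .d => .b

def usesA : St → Bool
  | .b => true
  | .c => true
  | .d => false

/-- The action of the Grigorchuk generators `b = (a,c)`, `c = (a,d)`, `d = (1,b)`. -/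
def gFun : St → V → V
  | _, [] => []
  | s, false :: w => false :: (if usesA s then aFun w else w)
  | s, true :: w => true :: gFun (nextSt s) w

lemma gFun_invol : ∀ (w : V) (s : St), gFun s (gFun s w) = w
  | [], _ => rfl
  | false :: w, s => by cases h : usesA s <;> simp [gFun, h, aFun_invol]
  | true :: w, s => by simp [gFun, gFun_invol w]

def gPerm (s : St) : Equiv.Perm V :=
  ⟨gFun s, gFun s, fun w => gFun_invol w s, fun w => gFun_invol w s⟩

/-- The Grigorchuk generator `b = (a, c)`. -/
def b : Equiv.Perm V := gPerm .b
/-- The Grigorchuk generator `c = (a, d)`. -/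
def c : Equiv.Perm V := gPerm .c
/-- The Grigorchuk generator `d = (1, b)`. -/
def d : Equiv.Perm V := gPerm .d

def pairFun (f g : V → V) : V → V
  | [] => []
  | false :: w => false :: f w
  | true :: w => true :: g w

/-- The automorphism `(f, g)` acting as `f` on the left subtree and as `g` on the
right subtree, fixing the first level. -/
def pair (f g : Equiv.Perm V) : Equiv.Perm V where
  toFun := pairFun f g
  invFun := pairFun f.symm g.symm
  left_inv := by rintro (_ | ⟨i, w⟩) <;> first | rfl | cases i <;> simp [pairFun]
  right_inv := by rintro (_ | ⟨i, w⟩) <;> first | rfl | cases i <;> simp [pairFun]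

/-- The commutator `[u, v] = u⁻¹v⁻¹uv` of the paper.  Words of tree automorphisms in the
paper are composed left-to-right, so the paper's word `u⁻¹v⁻¹uv` corresponds to the
permutation `v * u * v⁻¹ * u⁻¹` under the usual (right-to-left) composition of functions. -/
def pcomm (u v : Equiv.Perm V) : Equiv.Perm V := v * u * v⁻¹ * u⁻¹

/-- The conjugate `v⁻¹ u v` of the paper (left-to-right composition). -/
def pconj (u v : Equiv.Perm V) : Equiv.Perm V := v * u * v⁻¹


/-- The Grigorchuk group `G = ⟨a, b, c, d⟩`. -/
def G : Subgroup (Equiv.Perm V) := Subgroup.closure {a, b, c, d}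

/-- The group `L = ⟨a, b, c, d, x⟩`. -/
def L : Subgroup (Equiv.Perm V) := Subgroup.closure {a, b, c, d, x}

/-- `K = ⟨[a,b]⟩^G`, the normal closure of `[a, b]` in `G`. -/
def K : Subgroup (Equiv.Perm V) :=
  Subgroup.closure {p | ∃ g ∈ G, p = pconj (pcomm a b) g}

/-- `S = [⟨x⟩, G]^L`, generated as a normal subgroup of `L` by
`[a,x], [b,x], [c,x], [d,x]`. -/
def S : Subgroup (Equiv.Perm V) :=
  Subgroup.closure
    {p | ∃ l ∈ L, ∃ y ∈ ({a, b, c, d} : Set (Equiv.Perm V)), p = pconj (pcomm y x) l}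

/-- `R = ⟨K, S, γ₂(L)⟩^L`, the normal closure in `L` of `K`, `S` and the commutator
subgroup `γ₂(L) = [L, L]`. -/
def R : Subgroup (Equiv.Perm V) :=
  Subgroup.closure
    {p | ∃ l ∈ L, ∃ r : Equiv.Perm V,
      (r ∈ K ∨ r ∈ S ∨ r ∈ ⁅L, L⁆) ∧ p = pconj r l}

/-! Every `l ∈ L` is the right coordinate of some `(v, l) ∈ L`: for the generators this is
`aba = (c, a)`, `b = (a, c)`, `c = (a, d)`, `d = (1, b)` and `x² = (x, x)`. For a generator `y`
of `G` this makes `(1, [y, x])` the commutator of `(1, x) = a⁻¹x` with some `(v, y) ∈ L`, so it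
lies in `γ₂(L) ≤ R`; conjugating by `(v, l) ∈ L` gives `(1, [y, x]^l) ∈ R`, since `L` normalizes
`R`. Conjugation by `a` then swaps the two coordinates. -/

open scoped commutatorElement

@[simp]
lemma pair_mul (u v u' v' : Equiv.Perm V) : pair u v * pair u' v' = pair (u * u') (v * v') := by
  ext (_ | ⟨_ | _, w⟩) <;> rfl

@[simp]
lemma pair_one : pair 1 1 = 1 := by
  ext (_ | ⟨_ | _, w⟩) <;> rfl

@[simp]
lemma pair_inv (u v : Equiv.Perm V) : (pair u v)⁻¹ = pair u⁻¹ v⁻¹ := by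
  ext (_ | ⟨_ | _, w⟩) <;> rfl

/-- The embedding `Aut(T₀) × Aut(T₁) ↪ Aut(T)`. -/
def pairHom : Equiv.Perm V × Equiv.Perm V →* Equiv.Perm V where
  toFun p := pair p.1 p.2
  map_one' := pair_one
  map_mul' _ _ := (pair_mul ..).symm

@[simp]
lemma pairHom_apply (p : Equiv.Perm V × Equiv.Perm V) : pairHom p = pair p.1 p.2 := rfl

lemma pair_commutatorElement (u v u' v' : Equiv.Perm V) :
    pair ⁅u, u'⁆ ⁅v, v'⁆ = ⁅pair u v, pair u' v'⁆ := by
  simp [commutatorElement_def]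

lemma a_mul_pair_mul_a_inv (u v : Equiv.Perm V) : a * pair u v * a⁻¹ = pair v u := by
  ext (_ | ⟨_ | _, w⟩) <;> rfl

lemma a_mul_b_mul_a_inv : a * b * a⁻¹ = pair c a := by
  ext (_ | ⟨_ | _, w⟩) <;> rfl

lemma b_eq_pair : b = pair a c := by
  ext (_ | ⟨_ | _, w⟩) <;> rfl

lemma c_eq_pair : c = pair a d := by
  ext (_ | ⟨_ | _, w⟩) <;> rfl

lemma d_eq_pair : d = pair 1 b := by
  ext (_ | ⟨_ | _, w⟩) <;> rfl

lemma x_mul_x : x * x = pair x x := by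
  ext (_ | ⟨_ | _, w⟩) <;> rfl

lemma a_inv_mul_x : a⁻¹ * x = pair 1 x := by
  ext (_ | ⟨_ | _, w⟩) <;> rfl

lemma a_mem_L : a ∈ L := Subgroup.subset_closure (by simp)
lemma b_mem_L : b ∈ L := Subgroup.subset_closure (by simp)
lemma c_mem_L : c ∈ L := Subgroup.subset_closure (by simp)
lemma d_mem_L : d ∈ L := Subgroup.subset_closure (by simp)
lemma x_mem_L : x ∈ L := Subgroup.subset_closure (by simp)

lemma mem_L_of_mem_generators_G {y : Equiv.Perm V} (hy : y ∈ ({a, b, c, d} : Set _)) : y ∈ L := by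
  rcases hy with rfl | rfl | rfl | rfl
  exacts [a_mem_L, b_mem_L, c_mem_L, d_mem_L]

lemma pair_one_x_mem_L : pair 1 x ∈ L :=
  a_inv_mul_x ▸ mul_mem (inv_mem a_mem_L) x_mem_L

lemma pair_c_a_mem_L : pair c a ∈ L :=
  a_mul_b_mul_a_inv ▸ mul_mem (mul_mem a_mem_L b_mem_L) (inv_mem a_mem_L)

lemma pair_x_x_mem_L : pair x x ∈ L :=
  x_mul_x ▸ mul_mem x_mem_L x_mem_L

lemma L_le_map_snd_comap_pairHom : L ≤ (L.comap pairHom).map (MonoidHom.snd _ _) := by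
  refine Subgroup.closure_le _ |>.mpr ?_
  rintro _ (rfl | rfl | rfl | rfl | rfl)
  exacts [⟨(c, a), pair_c_a_mem_L, rfl⟩, ⟨(1, b), (d_eq_pair ▸ d_mem_L : pair 1 b ∈ L), rfl⟩,
    ⟨(a, c), (b_eq_pair ▸ b_mem_L : pair a c ∈ L), rfl⟩,
    ⟨(a, d), (c_eq_pair ▸ c_mem_L : pair a d ∈ L), rfl⟩, ⟨(x, x), pair_x_x_mem_L, rfl⟩]

lemma exists_pair_mem_L {l : Equiv.Perm V} (hl : l ∈ L) : ∃ v, pair v l ∈ L := by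
  obtain ⟨⟨v, _⟩, hv, rfl⟩ := L_le_map_snd_comap_pairHom hl
  exact ⟨v, hv⟩

lemma L_le_normalizer_R : L ≤ Subgroup.normalizer R := by
  refine Subgroup.le_normalizer_closure_iff.mpr ?_
  rintro g hg _ ⟨l, hl, r, hr, rfl⟩
  exact Subgroup.subset_closure ⟨g * l, mul_mem hg hl, r, hr, by simp only [pconj]; group⟩

lemma conj_mem_R {g r : Equiv.Perm V} (hg : g ∈ L) (hr : r ∈ R) : g * r * g⁻¹ ∈ R :=
  (Subgroup.mem_normalizer_iff.mp (L_le_normalizer_R hg) r).mp hr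

lemma commutatorElement_mem_R {u w : Equiv.Perm V} (hu : u ∈ L) (hw : w ∈ L) : ⁅u, w⁆ ∈ R :=
  Subgroup.subset_closure
    ⟨1, one_mem L, _, .inr (.inr (Subgroup.commutator_mem_commutator hu hw)), by simp [pconj]⟩

lemma pair_one_pcomm_x_mem_R {y : Equiv.Perm V} (hy : y ∈ L) : pair 1 (pcomm y x) ∈ R := by
  obtain ⟨v, hv⟩ := exists_pair_mem_L hy
  have hcomm : pair 1 (pcomm y x) = ⁅pair 1 x, pair v y⁆ := by
    rw [← pair_commutatorElement, commutatorElement_one_left, pcomm, commutatorElement_def]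
  exact hcomm ▸ commutatorElement_mem_R pair_one_x_mem_L hv

lemma S_le_comap_pair_one : S ≤ R.comap (pairHom.comp (MonoidHom.inr _ _)) := by
  refine Subgroup.closure_le _ |>.mpr ?_
  rintro _ ⟨l, hl, y, hy, rfl⟩
  obtain ⟨v, hv⟩ := exists_pair_mem_L hl
  have hconj : pair 1 (pconj (pcomm y x) l) = pair v l * pair 1 (pcomm y x) * (pair v l)⁻¹ := by
    simp [pconj]
  show pair 1 (pconj (pcomm y x) l) ∈ R
  rw [hconj]
  exact conj_mem_R hv (pair_one_pcomm_x_mem_R (mem_L_of_mem_generators_G hy))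

/-- Lemma 2.7 (last part): `R ⪰ S × S`, i.e. `R` contains `(s, 1)` and `(1, s)` for
every `s ∈ S`. -/
theorem R_contains_S_times_S :
    ∀ s : Equiv.Perm V, s ∈ S → pair s 1 ∈ R ∧ pair 1 s ∈ R := by
  intro s hs
  have hright : pair 1 s ∈ R := S_le_comap_pair_one hs
  exact ⟨a_mul_pair_mul_a_inv 1 s ▸ conj_mem_R a_mem_L hright, hright⟩

end GrigTree
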